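/- In the global construction for a formula with m clauses over n variables, suppose T ⊆ {1,…,n} is such that for every clause index j ∈ {1,…,m} there is exactly one r ∈ {1,2,3} with v(j,r) ∈ T, and denote this unique index by r_j. Then the function f(x₁,x₂) = Σ_{i∈T} f_{−1}(x₁, x₂ + iΔ) + Σ_{i∈{1,…,n}\T} f_{1}(x₁, x₂ + iΔ) + Σ_{j=1}^{m} f_{s_{r_j}^{(j)}}(x₁, x₂ − jΔ) fits every labeled data point of the constructed data set X_F, i.e., f(x₁,x₂) = y for every labeled point ((x₁,x₂),y) ∈ X_F. -/

import Mathlib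

/-!
The levees of `f` all have slope in `[-1, 1]`, the points of a single gadget lie within
`ℓ¹`-distance `16m` of its centre, and distinct gadgets are at least `Δ = 16m + 6` apart
vertically. So at a gadget point only the levee attached to that gadget is nonzero, and it fits
the gadget because its slope is one of the gadget's slopes: at each crossing point of two
consecutive gadget slopes, a levee whose slope is not strictly between them vanishes.

The point `p_{j,r}` lies on the centre lines of the slope-`1` levee of the variable `v(j,r)` and
of the slope-`s_r^{(j)}` levee of clause `j`. Every other levee vanishes there: its offset at
`p_{j,r}` is at least `Δ`, except for the other levees of clause `j`, whose slopes differ from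
`s_r^{(j)}` by at least `δ`, so that their offset is at least `δ` times the first coordinate of
`p_{j,r}`, hence at least `Δδ ≥ 2`. Exactly one of the two levees through `p_{j,r}` occurs in `f`:
the variable levee if `v(j,r) ∉ T`, the clause levee if `v(j,r) ∈ T`, because then `r = r_j`.
-/

/-- The levee with slope `s`, as a piecewise definition. -/
noncomputable def levee (s x₁ x₂ : ℝ) : ℝ :=
  if 2 ≤ |x₂ - s * x₁| then 0
  else if |x₂ - s * x₁| ≤ 1 then 1
  else if x₂ - s * x₁ < -1 then 2 + x₂ - s * x₁
  else 2 - x₂ + s * x₁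

/-- The selection gadget for `ℓ` slopes `s 0 < s 1 < ⋯ < s (ℓ-1)` and parameter `ε`, as a set of
labeled data points `((x₁, x₂), y)`. -/
noncomputable def selGadget (ℓ : ℕ) (s : ℕ → ℝ) (ε : ℝ) : Set ((ℝ × ℝ) × ℝ) :=
  ({((0, -4), 0), ((0, -3), 0), ((0, -2), 0), ((0, -5/3), 1/3), ((0, -4/3), 2/3),
    ((0, -1), 1), ((0, 0), 1), ((0, 1), 1), ((0, 4/3), 2/3), ((0, 5/3), 1/3),
    ((0, 2), 0), ((0, 3), 0), ((0, 4), 0)} : Set ((ℝ × ℝ) × ℝ)) ∪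
  ({((-ε, -4 - ε * s (ℓ - 1)), 0), ((-ε, -3 - ε * s (ℓ - 1)), 0), ((-ε, -2 - ε * s (ℓ - 1)), 0),
    ((-ε, -1 - ε * s 0), 1), ((-ε, 0), 1), ((-ε, 1 - ε * s (ℓ - 1)), 1),
    ((-ε, 2 - ε * s 0), 0), ((-ε, 3 - ε * s 0), 0), ((-ε, 4 - ε * s 0), 0)} : Set ((ℝ × ℝ) × ℝ)) ∪
  ({((ε, -4 + ε * s 0), 0), ((ε, -3 + ε * s 0), 0), ((ε, -2 + ε * s 0), 0),
    ((ε, -1 + ε * s (ℓ - 1)), 1), ((ε, 0), 1), ((ε, 1 + ε * s 0), 1),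
    ((ε, 2 + ε * s (ℓ - 1)), 0), ((ε, 3 + ε * s (ℓ - 1)), 0),
    ((ε, 4 + ε * s (ℓ - 1)), 0)} : Set ((ℝ × ℝ) × ℝ)) ∪
  {q | ∃ i : ℕ, i + 1 < ℓ ∧
      (q = ((-4 / (s (i + 1) - s i), -2 * (s i + s (i + 1)) / (s (i + 1) - s i)), 0) ∨
       q = ((4 / (s (i + 1) - s i), 2 * (s i + s (i + 1)) / (s (i + 1) - s i)), 0))}

/-- The selection gadget shifted by offset `z` along the `x₂`-axis. -/
noncomputable def selGadgetOff (ℓ : ℕ) (s : ℕ → ℝ) (ε z : ℝ) : Set ((ℝ × ℝ) × ℝ) :=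
  (fun q : (ℝ × ℝ) × ℝ => ((q.1.1, q.1.2 + z), q.2)) '' selGadget ℓ s ε

/-- The slope `s_r^{(j)} = (2j − 3 + r)·δ − 1` with `δ = 1/(2m)` of the global construction. -/
noncomputable def slopeG (m j r : ℕ) : ℝ :=
  (2 * (j : ℝ) - 3 + (r : ℝ)) * (1 / (2 * (m : ℝ))) - 1

/-- The offset distance `Δ = 16m + 6` of the global construction. -/
noncomputable def DeltaG (m : ℕ) : ℝ := 16 * (m : ℝ) + 6

/-- The point `p_{j,r}` of the global construction, where `i = v(j,r)`. -/
noncomputable def pPoint (m i j r : ℕ) : ℝ × ℝ :=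
  (DeltaG m * ((i : ℝ) + (j : ℝ)) / (1 - slopeG m j r),
   DeltaG m * ((i : ℝ) + (j : ℝ)) / (1 - slopeG m j r) - DeltaG m * (i : ℝ))

/-- The two slopes `-1 < 1` used by the variable gadgets. -/
noncomputable def varSlopes : ℕ → ℝ := fun t => if t = 0 then -1 else 1

/-- The data set `X_F` of the global construction: one selection gadget (with slopes
`s₁^{(j)} < s₂^{(j)} < s₃^{(j)}`, parameter `ε = 1/3` and offset `jΔ`) per clause, one selection
gadget (with slopes `-1 < 1`, parameter `ε = 1/3` and offset `-iΔ`) per variable, and the points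
`p_{j,r}` with label `1`. -/
noncomputable def XF (m n : ℕ) (v : ℕ → ℕ → ℕ) : Set ((ℝ × ℝ) × ℝ) :=
  (⋃ j ∈ Set.Icc 1 m, selGadgetOff 3 (fun i => slopeG m j (i + 1)) (1/3) ((j : ℝ) * DeltaG m)) ∪
  (⋃ i ∈ Set.Icc 1 n, selGadgetOff 2 varSlopes (1/3) (-((i : ℝ) * DeltaG m))) ∪
  {q | ∃ j, 1 ≤ j ∧ j ≤ m ∧ ∃ r, 1 ≤ r ∧ r ≤ 3 ∧ q = (pPoint m (v j r) j r, 1)}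

section Levee

variable {s x₁ x₂ : ℝ}

theorem levee_eq_zero_of_two_le_abs (h : 2 ≤ |x₂ - s * x₁|) : levee s x₁ x₂ = 0 :=
  if_pos h

theorem levee_eq_zero_of_le (h : x₂ - s * x₁ ≤ -2) : levee s x₁ x₂ = 0 :=
  levee_eq_zero_of_two_le_abs (le_abs.mpr (Or.inr (by linarith)))

theorem levee_eq_zero_of_ge (h : 2 ≤ x₂ - s * x₁) : levee s x₁ x₂ = 0 :=
  levee_eq_zero_of_two_le_abs (le_abs.mpr (Or.inl h))

theorem levee_eq_one_of_abs_le (h : |x₂ - s * x₁| ≤ 1) : levee s x₁ x₂ = 1 := by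
  rw [levee, if_neg (by linarith), if_pos h]

theorem levee_eq_one (h₁ : -1 ≤ x₂ - s * x₁) (h₂ : x₂ - s * x₁ ≤ 1) : levee s x₁ x₂ = 1 :=
  levee_eq_one_of_abs_le (abs_le.mpr ⟨h₁, h₂⟩)

theorem levee_eq_zero_of_eq_add_int_mul {b Δ : ℝ} {k : ℤ} (hs : |s| ≤ 1)
    (hΔ : |x₁| + |b| + 2 ≤ Δ) (hk : k ≠ 0) (hx : x₂ = b + k * Δ) : levee s x₁ x₂ = 0 := by
  apply levee_eq_zero_of_two_le_abs
  have hk : (1 : ℝ) ≤ |(k : ℝ)| := by exact_mod_cast Int.one_le_abs hk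
  have hkΔ : Δ ≤ |k * Δ| := by
    rw [abs_mul, abs_of_nonneg (by linarith [abs_nonneg x₁, abs_nonneg b] : 0 ≤ Δ)]
    nlinarith [abs_nonneg x₁, abs_nonneg b]
  have hsx : |s * x₁| ≤ |x₁| := by
    rw [abs_mul]; exact mul_le_of_le_one_left (abs_nonneg x₁) hs
  have := abs_add_three (x₂ - s * x₁) (-b) (s * x₁)
  rw [abs_neg, show x₂ - s * x₁ + -b + s * x₁ = k * Δ by rw [hx]; ring] at this
  linarith

end Levee

section SelectionGadget

variable {ℓ : ℕ} {s : ℕ → ℝ} {ε : ℝ}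

/-- `(4c - 2(a + b)) / (b - a)` is the offset `x₂ - c x₁` of the point
`(-4, -2(a + b)) / (b - a)` where the levees of slopes `a < b` meet. -/
theorem two_le_abs_crossing {a b c : ℝ} (hab : a < b) (hc : c ≤ a ∨ b ≤ c) :
    2 ≤ |(4 * c - 2 * (a + b)) / (b - a)| := by
  rw [abs_div, abs_of_pos (sub_pos.mpr hab), le_div_iff₀ (sub_pos.mpr hab)]
  rcases hc with hc | hc
  · exact le_abs.mpr (Or.inr (by linarith))
  · exact le_abs.mpr (Or.inl (by linarith))

theorem selGadget_fit {k : ℕ} (hk : k < ℓ) (hs : StrictMonoOn s (Set.Iio ℓ)) (hε : 0 < ε)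
    (h₀ : 3 * ε * |s 0| ≤ 1) (h₁ : 3 * ε * |s (ℓ - 1)| ≤ 1) :
    ∀ q ∈ selGadget ℓ s ε, levee (s k) q.1.1 q.1.2 = q.2 := by
  have hmem : ∀ {i}, i < ℓ → i ∈ Set.Iio ℓ := id
  have hs₀ : ε * s 0 ≤ ε * s k :=
    mul_le_mul_of_nonneg_left ((hs.le_iff_le (hmem (by omega)) (hmem hk)).mpr (by omega)) hε.le
  have hs₁ : ε * s k ≤ ε * s (ℓ - 1) :=
    mul_le_mul_of_nonneg_left ((hs.le_iff_le (hmem hk) (hmem (by omega))).mpr (by omega)) hε.le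
  have habs : ∀ i, 3 * ε * |s i| ≤ 1 → -(1 / 3) ≤ ε * s i ∧ ε * s i ≤ 1 / 3 := fun i hi =>
    abs_le.mp (by rw [abs_mul, abs_of_pos hε]; linarith)
  obtain ⟨h₀l, -⟩ := habs 0 h₀
  obtain ⟨-, h₁u⟩ := habs (ℓ - 1) h₁
  intro q hq
  simp only [selGadget, Set.mem_union, Set.mem_insert_iff, Set.mem_singleton_iff,
    Set.mem_ofPred_eq] at hq
  rcases hq with (((rfl|rfl|rfl|rfl|rfl|rfl|rfl|rfl|rfl|rfl|rfl|rfl|rfl)|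
    (rfl|rfl|rfl|rfl|rfl|rfl|rfl|rfl|rfl))|(rfl|rfl|rfl|rfl|rfl|rfl|rfl|rfl|rfl))|⟨i, hi, rfl|rfl⟩
  all_goals try first
    | exact levee_eq_zero_of_le (by linarith)
    | exact levee_eq_zero_of_ge (by linarith)
    | exact levee_eq_one (by linarith) (by linarith)
    | (norm_num [levee]; done)
  all_goals
    have hi : s i < s (i + 1) := hs (hmem (by omega)) (hmem hi) (by omega)
    have hcross := two_le_abs_crossing hi
      (if h : k ≤ i then Or.inl ((hs.le_iff_le (hmem hk) (hmem (by omega))).mpr h)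
        else Or.inr ((hs.le_iff_le (hmem (by omega)) (hmem hk)).mpr (by omega)))
    apply levee_eq_zero_of_two_le_abs
  · convert hcross using 2; field_simp; ring
  · rw [← abs_neg]; convert hcross using 2; field_simp; ring

theorem selGadget_abs_add_abs_le {d : ℝ} (hℓ : 0 < ℓ) (hs : ∀ i < ℓ, |s i| ≤ 1)
    (hgap : ∀ i, i + 1 < ℓ → d ≤ s (i + 1) - s i) (hd : 0 < d) (hε : 0 ≤ ε) (hε' : ε ≤ 1 / 3) :
    ∀ q ∈ selGadget ℓ s ε, |q.1.1| + |q.1.2| ≤ max 5 (8 / d) := by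
  have hεs : ∀ i < ℓ, -(1 / 3) ≤ ε * s i ∧ ε * s i ≤ 1 / 3 := fun i hi =>
    abs_le.mp (by rw [abs_mul, abs_of_nonneg hε]; nlinarith [hs i hi, abs_nonneg (s i)])
  obtain ⟨h₀l, h₀u⟩ := hεs 0 hℓ
  obtain ⟨h₁l, h₁u⟩ := hεs (ℓ - 1) (by omega)
  have hfixed : ∀ {a b : ℝ}, -(1 / 3) ≤ a → a ≤ 1 / 3 → -(13 / 3) ≤ b → b ≤ 13 / 3 →
      |a| + |b| ≤ max 5 (8 / d) := fun h₁ h₂ h₃ h₄ =>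
    le_max_of_le_left (by linarith [abs_le.mpr ⟨h₁, h₂⟩, abs_le.mpr ⟨h₃, h₄⟩])
  have hcross : ∀ i, i + 1 < ℓ → ∀ c : ℝ, |c| = 1 →
      |c * 4 / (s (i + 1) - s i)| + |c * (2 * (s i + s (i + 1))) / (s (i + 1) - s i)| ≤
        max 5 (8 / d) := by
    intro i hi c hc
    have hpos : 0 < s (i + 1) - s i := hd.trans_le (hgap i hi)
    have hsum : |s i + s (i + 1)| ≤ 2 := by
      linarith [abs_add_le (s i) (s (i + 1)), hs i (by omega), hs (i + 1) hi]
    refine le_max_of_le_right ?_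
    rw [abs_div, abs_div, abs_of_pos hpos, ← add_div, abs_mul, abs_mul, abs_mul, hc,
      div_le_div_iff₀ hpos hd]
    norm_num
    nlinarith [hgap i hi]
  intro q hq
  simp only [selGadget, Set.mem_union, Set.mem_insert_iff, Set.mem_singleton_iff,
    Set.mem_ofPred_eq] at hq
  rcases hq with (((rfl|rfl|rfl|rfl|rfl|rfl|rfl|rfl|rfl|rfl|rfl|rfl|rfl)|
    (rfl|rfl|rfl|rfl|rfl|rfl|rfl|rfl|rfl))|(rfl|rfl|rfl|rfl|rfl|rfl|rfl|rfl|rfl))|⟨i, hi, rfl|rfl⟩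
  all_goals try exact hfixed (by linarith) (by linarith) (by linarith) (by linarith)
  · convert hcross i hi (-1) (by norm_num) using 3 <;> ring
  · convert hcross i hi 1 (by norm_num) using 3 <;> ring

end SelectionGadget

section Construction

variable {m n i j r : ℕ}

theorem slopeG_sub (m j r j' r' : ℕ) :
    slopeG m j r - slopeG m j' r' =
      ((2 * (j : ℝ) + r) - (2 * (j' : ℝ) + r')) * (1 / (2 * (m : ℝ))) := by
  unfold slopeG; ring

theorem slopeG_mem_Icc (hj₁ : 1 ≤ j) (hjm : j ≤ m) (hr₁ : 1 ≤ r) (hr₃ : r ≤ 3) :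
    slopeG m j r ∈ Set.Icc (-1) 0 := by
  have hj₁' : (1 : ℝ) ≤ j := by exact_mod_cast hj₁
  have hjm' : (j : ℝ) ≤ m := by exact_mod_cast hjm
  have hr₁' : (1 : ℝ) ≤ r := by exact_mod_cast hr₁
  have hr₃' : (r : ℝ) ≤ 3 := by exact_mod_cast hr₃
  have hm : (0 : ℝ) < 2 * m := by linarith
  rw [slopeG, Set.mem_Icc, mul_one_div, le_sub_iff_add_le, sub_nonpos, neg_add_cancel,
    div_le_one hm]
  exact ⟨div_nonneg (by linarith) hm.le, by linarith⟩

theorem abs_slopeG_le_one (hj₁ : 1 ≤ j) (hjm : j ≤ m) (hr₁ : 1 ≤ r) (hr₃ : r ≤ 3) :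
    |slopeG m j r| ≤ 1 := by
  obtain ⟨h₁, h₂⟩ := slopeG_mem_Icc hj₁ hjm hr₁ hr₃
  exact abs_le.mpr ⟨h₁, by linarith⟩

theorem two_le_DeltaG : 2 ≤ DeltaG m := by unfold DeltaG; linarith [(m.cast_nonneg : (0 : ℝ) ≤ m)]

theorem two_le_DeltaG_mul_inv (hm : 1 ≤ m) : 2 ≤ DeltaG m * (1 / (2 * (m : ℝ))) := by
  have hm' : (1 : ℝ) ≤ m := by exact_mod_cast hm
  rw [DeltaG, mul_one_div, le_div_iff₀ (by linarith)]
  linarith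

theorem clauseGadget_fit (hj₁ : 1 ≤ j) (hjm : j ≤ m) (hr₁ : 1 ≤ r) (hr₃ : r ≤ 3) :
    ∀ q ∈ selGadget 3 (fun i => slopeG m j (i + 1)) (1 / 3),
      levee (slopeG m j r) q.1.1 q.1.2 = q.2 := by
  have hm : (0 : ℝ) < m := by exact_mod_cast (by omega : 0 < m)
  have hmono : StrictMono fun i : ℕ => slopeG m j (i + 1) := fun i i' h => by
    have : (i : ℝ) < i' := by exact_mod_cast h
    rw [← sub_pos, slopeG_sub]; push_cast
    exact mul_pos (by linarith) (by positivity)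
  have h := selGadget_fit (ℓ := 3) (ε := 1 / 3) (k := r - 1) (by omega) (hmono.strictMonoOn _)
    (by norm_num) (by linarith [abs_slopeG_le_one (r := 1) hj₁ hjm le_rfl (by norm_num)])
    (by linarith [abs_slopeG_le_one (r := 3) hj₁ hjm (by norm_num) le_rfl])
  rwa [Nat.sub_add_cancel hr₁] at h

theorem clauseGadget_abs_add_abs_le (hj₁ : 1 ≤ j) (hjm : j ≤ m) :
    ∀ q ∈ selGadget 3 (fun i => slopeG m j (i + 1)) (1 / 3), |q.1.1| + |q.1.2| ≤ 16 * m := by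
  have hm : (1 : ℝ) ≤ m := by exact_mod_cast (by omega : 1 ≤ m)
  intro q hq
  have h := selGadget_abs_add_abs_le (d := 1 / (2 * m)) (by norm_num)
    (fun i hi => abs_slopeG_le_one hj₁ hjm (by omega) (by omega))
    (fun i _ => by rw [slopeG_sub]; push_cast; linarith) (by positivity) (by norm_num)
    (by norm_num) q hq
  rw [div_div_eq_mul_div, div_one, max_eq_right (by linarith)] at h
  linarith

theorem varSlopes_strictMonoOn : StrictMonoOn varSlopes (Set.Iio 2) := by
  intro i hi i' hi' h
  simp only [Set.mem_Iio] at hi hi'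
  obtain ⟨rfl, rfl⟩ : i = 0 ∧ i' = 1 := by omega
  norm_num [varSlopes]

theorem varGadget_fit {k : ℕ} (hk : k < 2) :
    ∀ q ∈ selGadget 2 varSlopes (1 / 3), levee (varSlopes k) q.1.1 q.1.2 = q.2 :=
  selGadget_fit hk varSlopes_strictMonoOn (by norm_num) (by norm_num [varSlopes])
    (by norm_num [varSlopes])

theorem varGadget_abs_add_abs_le : ∀ q ∈ selGadget 2 varSlopes (1 / 3), |q.1.1| + |q.1.2| ≤ 5 := by
  intro q hq
  have h := selGadget_abs_add_abs_le (d := 2) (by norm_num)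
    (fun i _ => by unfold varSlopes; split_ifs <;> norm_num)
    (fun i hi => by rw [show i = 0 by omega]; norm_num [varSlopes]) (by norm_num) (by norm_num)
    (by norm_num) q hq
  norm_num at h
  exact h

theorem pPoint_snd (m i j r : ℕ) :
    (pPoint m i j r).2 = (pPoint m i j r).1 - DeltaG m * i := rfl

theorem pPoint_fst_mul (hs : slopeG m j r ≤ 0) :
    (pPoint m i j r).1 * (1 - slopeG m j r) = DeltaG m * (i + j) :=
  div_mul_cancel₀ _ (by linarith)

theorem le_pPoint_fst (hs : slopeG m j r ∈ Set.Icc (-1) 0) :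
    DeltaG m * (i + j) / 2 ≤ (pPoint m i j r).1 := by
  have hA := pPoint_fst_mul (i := i) hs.2
  have hΔ : 0 ≤ DeltaG m * (i + j) :=
    mul_nonneg (by linarith [two_le_DeltaG (m := m)]) (by positivity)
  have hA₀ : 0 ≤ (pPoint m i j r).1 := div_nonneg hΔ (by linarith [hs.2])
  nlinarith [hs.1]

theorem levee_neg_one_pPoint (i' : ℕ) (hj₁ : 1 ≤ j) (hs : slopeG m j r ∈ Set.Icc (-1) 0) :
    levee (-1) (pPoint m i j r).1 ((pPoint m i j r).2 + i' * DeltaG m) = 0 := by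
  have hA := le_pPoint_fst (i := i) hs
  have hj : (1 : ℝ) ≤ j := by exact_mod_cast hj₁
  apply levee_eq_zero_of_ge
  rw [pPoint_snd]
  nlinarith [two_le_DeltaG (m := m), (by positivity : (0 : ℝ) ≤ i')]

theorem levee_one_pPoint (i' : ℕ) :
    levee 1 (pPoint m i j r).1 ((pPoint m i j r).2 + i' * DeltaG m) = if i' = i then 1 else 0 := by
  have hΔ := two_le_DeltaG (m := m)
  rw [pPoint_snd]
  split_ifs with h
  · subst h; exact levee_eq_one (by linarith) (by linarith)
  rcases Nat.lt_or_gt_of_ne h with h | h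
  · have h' : (i' : ℝ) + 1 ≤ i := by exact_mod_cast h
    exact levee_eq_zero_of_le (by nlinarith)
  · have h' : (i : ℝ) + 1 ≤ i' := by exact_mod_cast h
    exact levee_eq_zero_of_ge (by nlinarith)

theorem levee_slopeG_pPoint {j' r' : ℕ} (hi : 1 ≤ i) (hj₁ : 1 ≤ j) (hjm : j ≤ m) (hr₁ : 1 ≤ r)
    (hr₃ : r ≤ 3) (hr₁' : 1 ≤ r') (hr₃' : r' ≤ 3) :
    levee (slopeG m j' r') (pPoint m i j r).1 ((pPoint m i j r).2 - j' * DeltaG m) =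
      if j' = j ∧ r' = r then 1 else 0 := by
  set A := (pPoint m i j r).1
  set δ : ℝ := 1 / (2 * m)
  set c : ℝ := (2 * j + r) - (2 * j' + r')
  have hs := slopeG_mem_Icc hj₁ hjm hr₁ hr₃
  have hΔ := two_le_DeltaG (m := m)
  have hΔA : DeltaG m ≤ A := by
    have : (2 : ℝ) ≤ i + j := by exact_mod_cast (by omega : 2 ≤ i + j)
    nlinarith [le_pPoint_fst (i := i) hs]
  have hδ : 0 < δ := by
    have : (0 : ℝ) < m := by exact_mod_cast (by omega : 0 < m)
    positivity
  have hΔδ := two_le_DeltaG_mul_inv (m := m) (by omega)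
  -- `p_{j,r}` lies on the centre line of the `j`-th clause levee of slope `s_r^{(j)}`
  have ht : (pPoint m i j r).2 - j' * DeltaG m - slopeG m j' r' * A =
      A * (c * δ) + (j - j') * DeltaG m := by
    rw [pPoint_snd]
    linear_combination pPoint_fst_mul (i := i) hs.2 + A * slopeG_sub m j r j' r'
  have hr : (1 : ℝ) ≤ r ∧ (r : ℝ) ≤ 3 ∧ (1 : ℝ) ≤ r' ∧ (r' : ℝ) ≤ 3 := by
    refine ⟨?_, ?_, ?_, ?_⟩ <;> exact_mod_cast ‹_›
  split_ifs with h
  · obtain ⟨rfl, rfl⟩ := h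
    exact levee_eq_one_of_abs_le (by simp [ht, c])
  apply levee_eq_zero_of_two_le_abs
  rw [ht]
  rcases lt_trichotomy j' j with hj | rfl | hj
  · have hj : (j' : ℝ) + 1 ≤ j := by exact_mod_cast hj
    have : 0 ≤ A * (c * δ) := mul_nonneg (by linarith) (mul_nonneg (by linarith) hδ.le)
    exact le_abs.mpr (Or.inl (by nlinarith))
  · have hne : r' ≠ r := fun h' => h ⟨rfl, h'⟩
    have hc : 1 ≤ |c| := by
      have : c = ((r - r' : ℤ) : ℝ) := by push_cast; ring
      rw [this]; exact_mod_cast Int.one_le_abs (z := r - r') (by omega)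
    rw [sub_self, zero_mul, add_zero, abs_mul, abs_mul, abs_of_pos hδ,
      abs_of_pos (by linarith)]
    nlinarith [mul_le_mul_of_nonneg_right hΔA hδ.le]
  · have hj : (j : ℝ) + 1 ≤ j' := by exact_mod_cast hj
    have : A * (c * δ) ≤ 0 := mul_nonpos_of_nonneg_of_nonpos (by linarith)
      (mul_nonpos_of_nonpos_of_nonneg (by linarith) hδ.le)
    exact le_abs.mpr (Or.inr (by nlinarith))

variable {T : Finset ℕ} {rr : ℕ → ℕ}

noncomputable def assignmentLevees (m n : ℕ) (T : Finset ℕ) (rr : ℕ → ℕ) (x₁ x₂ : ℝ) : ℝ :=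
  (∑ i ∈ T, levee (-1) x₁ (x₂ + (i : ℝ) * DeltaG m)) +
    (∑ i ∈ Finset.Icc 1 n \ T, levee 1 x₁ (x₂ + (i : ℝ) * DeltaG m)) +
    ∑ j ∈ Finset.Icc 1 m, levee (slopeG m j (rr j)) x₁ (x₂ - (j : ℝ) * DeltaG m)

theorem assignmentLevees_clauseGadget (hrr : ∀ j, 1 ≤ j → j ≤ m → 1 ≤ rr j ∧ rr j ≤ 3)
    (hj₁ : 1 ≤ j) (hjm : j ≤ m) {q : (ℝ × ℝ) × ℝ}
    (hq : q ∈ selGadget 3 (fun i => slopeG m j (i + 1)) (1 / 3)) :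
    assignmentLevees m n T rr q.1.1 (q.1.2 + j * DeltaG m) = q.2 := by
  have hfar : |q.1.1| + |q.1.2| + 2 ≤ DeltaG m := by
    linarith [clauseGadget_abs_add_abs_le hj₁ hjm q hq, show DeltaG m = 16 * m + 6 from rfl]
  have hvar (σ : ℝ) (hσ : |σ| ≤ 1) (i : ℕ) :
      levee σ q.1.1 (q.1.2 + j * DeltaG m + i * DeltaG m) = 0 :=
    levee_eq_zero_of_eq_add_int_mul (k := j + i) hσ hfar (by omega) (by push_cast; ring)
  have hclause (j' : ℕ) (hj' : j' ∈ Finset.Icc 1 m) :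
      levee (slopeG m j' (rr j')) q.1.1 (q.1.2 + j * DeltaG m - j' * DeltaG m) =
        if j' = j then levee (slopeG m j' (rr j')) q.1.1 q.1.2 else 0 := by
    obtain ⟨hj'₁, hj'm⟩ := Finset.mem_Icc.mp hj'
    split_ifs with h
    · rw [h, add_sub_cancel_right]
    · exact levee_eq_zero_of_eq_add_int_mul (k := j - j')
        (abs_slopeG_le_one hj'₁ hj'm (hrr j' hj'₁ hj'm).1 (hrr j' hj'₁ hj'm).2) hfar (by omega)
        (by push_cast; ring)
  rw [assignmentLevees, Finset.sum_eq_zero (fun i _ => hvar (-1) (by simp) i),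
    Finset.sum_eq_zero (fun i _ => hvar 1 (by simp) i), Finset.sum_congr rfl hclause,
    Finset.sum_ite_eq', if_pos (Finset.mem_Icc.mpr ⟨hj₁, hjm⟩), zero_add, zero_add]
  exact clauseGadget_fit hj₁ hjm (hrr j hj₁ hjm).1 (hrr j hj₁ hjm).2 q hq

theorem assignmentLevees_varGadget (hm : 1 ≤ m) (hrr : ∀ j, 1 ≤ j → j ≤ m → 1 ≤ rr j ∧ rr j ≤ 3)
    (hi₁ : 1 ≤ i) (hin : i ≤ n) {q : (ℝ × ℝ) × ℝ} (hq : q ∈ selGadget 2 varSlopes (1 / 3)) :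
    assignmentLevees m n T rr q.1.1 (q.1.2 + -(i * DeltaG m)) = q.2 := by
  have hfar : |q.1.1| + |q.1.2| + 2 ≤ DeltaG m := by
    have : (1 : ℝ) ≤ m := by exact_mod_cast hm
    linarith [varGadget_abs_add_abs_le q hq, show DeltaG m = 16 * m + 6 from rfl]
  have hvar (σ : ℝ) (hσ : |σ| ≤ 1) (i' : ℕ) :
      levee σ q.1.1 (q.1.2 + -(i * DeltaG m) + i' * DeltaG m) =
        if i' = i then levee σ q.1.1 q.1.2 else 0 := by
    split_ifs with h
    · rw [h, neg_add_cancel_right]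
    · exact levee_eq_zero_of_eq_add_int_mul (k := i' - i) hσ hfar (by omega) (by push_cast; ring)
  have hclause (j : ℕ) (hj : j ∈ Finset.Icc 1 m) :
      levee (slopeG m j (rr j)) q.1.1 (q.1.2 + -(i * DeltaG m) - j * DeltaG m) = 0 := by
    obtain ⟨hj₁, hjm⟩ := Finset.mem_Icc.mp hj
    exact levee_eq_zero_of_eq_add_int_mul (k := -(i + j))
      (abs_slopeG_le_one hj₁ hjm (hrr j hj₁ hjm).1 (hrr j hj₁ hjm).2) hfar (by omega)
      (by push_cast; ring)
  rw [assignmentLevees, Finset.sum_congr rfl (fun i' _ => hvar (-1) (by simp) i'),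
    Finset.sum_congr rfl (fun i' _ => hvar 1 (by simp) i'), Finset.sum_ite_eq',
    Finset.sum_ite_eq', Finset.sum_eq_zero hclause, add_zero]
  by_cases hiT : i ∈ T
  · simpa [hiT, varSlopes] using varGadget_fit (k := 0) (by norm_num) q hq
  · simpa [hiT, hi₁, hin, varSlopes] using varGadget_fit (k := 1) (by norm_num) q hq

theorem assignmentLevees_pPoint (hrr : ∀ j, 1 ≤ j → j ≤ m → 1 ≤ rr j ∧ rr j ≤ 3)
    (hi₁ : 1 ≤ i) (hin : i ≤ n) (hj₁ : 1 ≤ j) (hjm : j ≤ m) (hr₁ : 1 ≤ r) (hr₃ : r ≤ 3)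
    (hsel : i ∈ T ↔ rr j = r) :
    assignmentLevees m n T rr (pPoint m i j r).1 (pPoint m i j r).2 = 1 := by
  have hclause (j' : ℕ) (hj' : j' ∈ Finset.Icc 1 m) :
      levee (slopeG m j' (rr j')) (pPoint m i j r).1 ((pPoint m i j r).2 - j' * DeltaG m) =
        if j' = j then (if rr j' = r then 1 else 0) else 0 := by
    obtain ⟨hj'₁, hj'm⟩ := Finset.mem_Icc.mp hj'
    rw [levee_slopeG_pPoint hi₁ hj₁ hjm hr₁ hr₃ (hrr j' hj'₁ hj'm).1 (hrr j' hj'₁ hj'm).2, ite_and]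
  rw [assignmentLevees,
    Finset.sum_eq_zero (fun i' _ => levee_neg_one_pPoint i' hj₁ (slopeG_mem_Icc hj₁ hjm hr₁ hr₃)),
    Finset.sum_congr rfl (fun i' _ => levee_one_pPoint i'), Finset.sum_ite_eq',
    Finset.sum_congr rfl hclause, Finset.sum_ite_eq', if_pos (Finset.mem_Icc.mpr ⟨hj₁, hjm⟩)]
  by_cases hiT : i ∈ T
  · simp [hiT, hsel.mp hiT]
  · simp [hiT, hi₁, hin, mt hsel.mpr hiT]

end Construction

theorem solution_fits_XF_general (m n : ℕ) (hm : 1 ≤ m)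
    (v : ℕ → ℕ → ℕ)
    (hv : ∀ j, 1 ≤ j → j ≤ m → ∀ r, 1 ≤ r → r ≤ 3 → 1 ≤ v j r ∧ v j r ≤ n)
    (T : Finset ℕ)
    (rr : ℕ → ℕ)
    (hrr : ∀ j, 1 ≤ j → j ≤ m →
      1 ≤ rr j ∧ rr j ≤ 3 ∧ v j (rr j) ∈ T ∧
        ∀ r, 1 ≤ r → r ≤ 3 → v j r ∈ T → r = rr j) :
    ∀ q ∈ XF m n v,
      ((∑ i ∈ T, levee (-1) q.1.1 (q.1.2 + (i : ℝ) * DeltaG m)) +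
        (∑ i ∈ Finset.Icc 1 n \ T, levee 1 q.1.1 (q.1.2 + (i : ℝ) * DeltaG m)) +
        ∑ j ∈ Finset.Icc 1 m, levee (slopeG m j (rr j)) q.1.1 (q.1.2 - (j : ℝ) * DeltaG m))
      = q.2 := by
  have hrange (j) (hj₁ : 1 ≤ j) (hjm : j ≤ m) : 1 ≤ rr j ∧ rr j ≤ 3 :=
    ⟨(hrr j hj₁ hjm).1, (hrr j hj₁ hjm).2.1⟩
  rintro _ ((hq | hq) | ⟨j, hj₁, hjm, r, hr₁, hr₃, rfl⟩)
  · simp only [Set.mem_iUnion, Set.mem_Icc, selGadgetOff, Set.mem_image] at hq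
    obtain ⟨j, ⟨hj₁, hjm⟩, q, hq, rfl⟩ := hq
    exact assignmentLevees_clauseGadget hrange hj₁ hjm hq
  · simp only [Set.mem_iUnion, Set.mem_Icc, selGadgetOff, Set.mem_image] at hq
    obtain ⟨i, ⟨hi₁, hin⟩, q, hq, rfl⟩ := hq
    exact assignmentLevees_varGadget hm hrange hi₁ hin hq
  · obtain ⟨-, -, hsel, huniq⟩ := hrr j hj₁ hjm
    exact assignmentLevees_pPoint hrange (hv j hj₁ hjm r hr₁ hr₃).1 (hv j hj₁ hjm r hr₁ hr₃).2
      hj₁ hjm hr₁ hr₃ ⟨fun h => (huniq r hr₁ hr₃ h).symm, fun h => h ▸ hsel⟩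

/-- If `T` selects exactly one literal per clause (the `r_j`-th one), then the corresponding sum
of levees fits every labeled data point of the constructed data set `X_F`. -/
theorem solution_fits_XF (m n : ℕ) (hm : 1 ≤ m) (hn : 1 ≤ n)
    (v : ℕ → ℕ → ℕ)
    (hv : ∀ j, 1 ≤ j → j ≤ m → ∀ r, 1 ≤ r → r ≤ 3 → 1 ≤ v j r ∧ v j r ≤ n)
    (hvdist : ∀ j, 1 ≤ j → j ≤ m → ∀ r r', 1 ≤ r → r ≤ 3 → 1 ≤ r' → r' ≤ 3 → r ≠ r' →
      v j r ≠ v j r')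
    (T : Finset ℕ) (hT : T ⊆ Finset.Icc 1 n)
    (rr : ℕ → ℕ)
    (hrr : ∀ j, 1 ≤ j → j ≤ m →
      1 ≤ rr j ∧ rr j ≤ 3 ∧ v j (rr j) ∈ T ∧
        ∀ r, 1 ≤ r → r ≤ 3 → v j r ∈ T → r = rr j) :
    ∀ q ∈ XF m n v,
      ((∑ i ∈ T, levee (-1) q.1.1 (q.1.2 + (i : ℝ) * DeltaG m)) +
        (∑ i ∈ Finset.Icc 1 n \ T, levee 1 q.1.1 (q.1.2 + (i : ℝ) * DeltaG m)) +
        ∑ j ∈ Finset.Icc 1 m, levee (slopeG m j (rr j)) q.1.1 (q.1.2 - (j : ℝ) * DeltaG m))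
      = q.2 :=
  solution_fits_XF_general m n hm v hv T rr hrr
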